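/- arXiv:2503.18219 — 3 statements merged into one kernel-verified Lean document; each statement's English description precedes it below -/
import Mathlib

section
/- Let X be a Banach space and let K ⊂ X be convex and not contained in any finite-dimensional subspace of X. Then for every d ∈ ℕ there exist linearly independent e_1,…,e_d ∈ X admitting biorthogonal functionals e_1*,…,e_d* ∈ X* (i.e. e_j*(e_k) = δ_{jk}), and an element e_0 ∈ K with e_1*(e_0) = … = e_d*(e_0) = 0, such that the Borel probability measure μ on X defined as the law of u = e_0 + Σ_{j=1}^d y_j e_j, where (y_1,…,y_d) is uniformly distributed on [0,1]^d, satisfies supp(μ) ⊂ K. -/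
open MeasureTheory ENNReal

noncomputable section

/-- The unit cube `[0,1]^d`. -/
def unitCube (d : ℕ) : Set (Fin d → ℝ) := Set.Icc 0 1

/-- The uniform (Lebesgue) measure on the unit cube `[0,1]^d`. -/
def cubeVol (d : ℕ) : Measure (Fin d → ℝ) := volume.restrict (unitCube d)

/-- The topological support of a measure: the set of points all of whose open
neighborhoods have positive measure. -/
def msupport {X : Type*} [TopologicalSpace X] [MeasurableSpace X] (μ : Measure X) : Set X :=
  { x | ∀ V : Set X, IsOpen V → x ∈ V → 0 < μ V }

lemma aux_exists_li {X : Type*} [NormedAddCommGroup X] [NormedSpace ℝ X]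
    (K : Set X)
    (hfd : ¬ ∃ S : Submodule ℝ X, FiniteDimensional ℝ S ∧ K ⊆ (S : Set X)) :
    ∀ n : ℕ, ∃ x : Fin n → X, LinearIndependent ℝ x ∧ ∀ i, x i ∈ K := by
  intro n
  induction n with
  | zero => exact ⟨fun i => 0, linearIndependent_empty_type, fun i => i.elim0⟩
  | succ n ih =>
    obtain ⟨x, hx, hxK⟩ := ih
    have hfin : FiniteDimensional ℝ (Submodule.span ℝ (Set.range x)) :=
      FiniteDimensional.span_of_finite ℝ (Set.finite_range x)
    have : ∃ k ∈ K, k ∉ Submodule.span ℝ (Set.range x) := by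
      by_contra h
      push_neg at h
      exact hfd ⟨Submodule.span ℝ (Set.range x), hfin, fun k hk => h k hk⟩
    obtain ⟨k, hkK, hk⟩ := this
    refine ⟨Fin.snoc x k, linearIndependent_fin_snoc.2 ⟨hx, hk⟩, fun i => ?_⟩
    induction i using Fin.lastCases with
    | last => simpa using hkK
    | cast j => simpa using hxK j

lemma aux_functional {X : Type*} [NormedAddCommGroup X] [NormedSpace ℝ X]
    (S : Submodule ℝ X) [FiniteDimensional ℝ S] {x : X} (hx : x ∉ S) :
    ∃ f : X →L[ℝ] ℝ, (∀ a ∈ S, f a = 0) ∧ f x = 1 := by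
  have hS : IsClosed (S : Set X) := Submodule.closed_of_finiteDimensional S
  obtain ⟨f, u, hfS, hux⟩ := geometric_hahn_banach_closed_point S.convex hS hx
  have hf0 : ∀ a ∈ S, f a = 0 := by
    intro a ha
    by_contra h
    have h1 := hfS (((|u| + 1) / f a) • a) (S.smul_mem _ ha)
    rw [_root_.map_smul, smul_eq_mul, div_mul_cancel₀ _ h] at h1
    have := abs_nonneg u
    have := le_abs_self u
    linarith
  have hu : 0 < u := by have := hfS 0 S.zero_mem; simpa using this
  have hfx : f x ≠ 0 := by linarith
  refine ⟨(f x)⁻¹ • f, fun a ha => ?_, ?_⟩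
  · simp [hf0 a ha]
  · simp [inv_mul_cancel₀ hfx]

lemma aux_sum {X : Type*} [AddCommGroup X] [Module ℝ X]
    (d : ℕ) (x : Fin (d+1) → X) (c : Fin (d+1) → ℝ) (a : ℝ) :
    ∑ i, c i • (Fin.cons (x 0) (fun j : Fin d => a • (x j.succ - x 0)) : Fin (d+1) → X) i
      = ∑ i, (Fin.cons (c 0 - a * ∑ j : Fin d, c j.succ)
          (fun j : Fin d => a * c j.succ) : Fin (d+1) → ℝ) i • x i := by
  rw [Fin.sum_univ_succ, Fin.sum_univ_succ]
  simp only [Fin.cons_zero, Fin.cons_succ, smul_smul, smul_sub, sub_smul, Finset.mul_sum]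
  rw [Finset.sum_sub_distrib, ← Finset.sum_smul]
  simp only [mul_comm a]
  abel

/-- **Proposition.** Let `X` be a Banach space and `K ⊆ X` convex and not contained in
any finite-dimensional subspace. Then for every `d ∈ ℕ` there are linearly independent
`e_1, …, e_d ∈ X` with biorthogonal functionals `e_1^*, …, e_d^* ∈ X^*`, and `e_0 ∈ K`
with `e_j^*(e_0) = 0`, such that the law `μ` of `u = e_0 + ∑ y_j e_j` with
`(y_1,…,y_d) ~ Unif([0,1]^d)` satisfies `supp(μ) ⊆ K`. -/
theorem measure_supported_on_convex
    {X : Type*} [NormedAddCommGroup X] [NormedSpace ℝ X]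
    [MeasurableSpace X] [BorelSpace X]
    (K : Set X) (hconv : Convex ℝ K)
    (hfd : ¬ ∃ S : Submodule ℝ X, FiniteDimensional ℝ S ∧ K ⊆ (S : Set X))
    (d : ℕ) (hd : 1 ≤ d) :
    ∃ e : Fin d → X, LinearIndependent ℝ e ∧
      ∃ estar : Fin d → (X →L[ℝ] ℝ),
        (∀ j k, estar j (e k) = if j = k then 1 else 0) ∧
        ∃ e₀ ∈ K, (∀ j, estar j e₀ = 0) ∧
          msupport (Measure.map (fun y : Fin d → ℝ => e₀ + ∑ j, y j • e j) (cubeVol d)) ⊆ K := by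
  obtain ⟨x, hx, hxK⟩ := aux_exists_li K hfd (d + 1)
  have hd0 : (0 : ℝ) < d := by exact_mod_cast hd
  set a : ℝ := (d : ℝ)⁻¹ with ha_def
  have ha : 0 < a := by positivity
  have had : a * d = 1 := inv_mul_cancel₀ (ne_of_gt hd0)
  set e : Fin d → X := fun j => a • (x j.succ - x 0) with he_def
  set g : Fin (d + 1) → X := Fin.cons (x 0) e with hg_def
  -- linear independence of `g`
  have hg : LinearIndependent ℝ g := by
    rw [Fintype.linearIndependent_iff]
    intro c hc
    rw [aux_sum d x c a] at hc
    have hzero := Fintype.linearIndependent_iff.1 hx _ hc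
    have hsucc : ∀ j : Fin d, c j.succ = 0 := by
      intro j
      have := hzero j.succ
      rw [Fin.cons_succ] at this
      exact (mul_eq_zero.1 this).resolve_left (ne_of_gt ha)
    intro i
    induction i using Fin.cases with
    | zero =>
      have := hzero 0
      rw [Fin.cons_zero] at this
      simp [hsucc] at this
      exact this
    | succ j => exact hsucc j
  have he : LinearIndependent ℝ e := by
    have : e = g ∘ Fin.succ := by
      funext j; simp [hg_def, Fin.cons_succ]
    rw [this]
    exact hg.comp Fin.succ (Fin.succ_injective d)
  -- biorthogonal functionals
  have hfun : ∀ j : Fin d, ∃ f : X →L[ℝ] ℝ,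
      (∀ z ∈ Submodule.span ℝ (g '' {j.succ}ᶜ), f z = 0) ∧ f (g j.succ) = 1 := by
    intro j
    have hnot : g j.succ ∉ Submodule.span ℝ (g '' {j.succ}ᶜ) :=
      hg.notMem_span_image (by simp)
    have : FiniteDimensional ℝ (Submodule.span ℝ (g '' {j.succ}ᶜ)) :=
      FiniteDimensional.span_of_finite ℝ ((Set.finite_range g).subset (Set.image_subset_range _ _))
    exact aux_functional _ hnot
  choose estar hestar0 hestar1 using hfun
  have hge : ∀ j : Fin d, g j.succ = e j := fun j => by simp [hg_def, Fin.cons_succ]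
  have hg0 : g 0 = x 0 := by simp [hg_def]
  refine ⟨e, he, estar, ?_, x 0, hxK 0, ?_, ?_⟩
  · intro j k
    by_cases hjk : j = k
    · subst hjk
      simp only [if_pos rfl]
      rw [← hge j]; exact hestar1 j
    · rw [if_neg hjk, ← hge k]
      refine hestar0 j _ (Submodule.subset_span ?_)
      exact ⟨k.succ, by simp [fun h => hjk ((Fin.succ_injective d h)).symm,
        (Fin.succ_injective d).ne (Ne.symm hjk)], rfl⟩
  · intro j
    rw [← hg0]
    exact hestar0 j _ (Submodule.subset_span ⟨0, by simp [(Fin.succ_ne_zero j).symm], rfl⟩)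
  · -- support
    set u : (Fin d → ℝ) → X := fun y => x 0 + ∑ j, y j • e j with hu_def
    have hmem : ∀ y ∈ unitCube d, u y ∈ K := by
      intro y hy
      obtain ⟨hy0, hy1⟩ := hy
      have hkey := aux_sum d x (Fin.cons 1 y) a
      have hl : ∑ i, (Fin.cons 1 y : Fin (d+1) → ℝ) i • g i = u y := by
        rw [Fin.sum_univ_succ]
        simp [hg_def, hu_def]
      rw [hl] at hkey
      rw [hkey]
      have hyS : ∑ j : Fin d, (Fin.cons (1:ℝ) y : Fin (d+1) → ℝ) j.succ ≤ d := by
        simp only [Fin.cons_succ]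
        calc ∑ j : Fin d, y j ≤ ∑ j : Fin d, 1 := Finset.sum_le_sum fun j _ => hy1 j
        _ = d := by simp
      refine hconv.sum_mem ?_ ?_ (fun i _ => hxK i)
      · intro i _
        induction i using Fin.cases with
        | zero =>
          rw [Fin.cons_zero, Fin.cons_zero, sub_nonneg]
          calc a * ∑ j : Fin d, (Fin.cons (1:ℝ) y : Fin (d+1) → ℝ) j.succ
              ≤ a * d := by nlinarith
          _ = 1 := had
        | succ j =>
          rw [Fin.cons_succ, Fin.cons_succ]
          exact mul_nonneg ha.le (hy0 j)
      · rw [Fin.sum_univ_succ]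
        simp only [Fin.cons_zero, Fin.cons_succ, ← Finset.mul_sum]
        ring
    have hucont : Continuous u := by
      apply continuous_const.add
      exact continuous_finset_sum _ fun j _ => (continuous_apply j).smul continuous_const
    have hcpt : IsCompact (u '' unitCube d) := (isCompact_Icc).image hucont
    intro z hz
    by_contra hzK
    have hznot : z ∉ u '' unitCube d := fun h => hzK (by
      obtain ⟨y, hy, rfl⟩ := h; exact hmem y hy)
    have hopen : IsOpen (u '' unitCube d)ᶜ := hcpt.isClosed.isOpen_compl
    have hpos := hz _ hopen hznot
    have : Measure.map u (cubeVol d) (u '' unitCube d)ᶜ = 0 := by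
      rw [Measure.map_apply hucont.measurable hopen.measurableSet, cubeVol,
        Measure.restrict_apply (hopen.measurableSet.preimage hucont.measurable)]
      convert measure_empty
      · ext y
        simp only [Set.mem_inter_iff, Set.mem_preimage, Set.mem_compl_iff, Set.mem_empty_iff_false,
          iff_false, not_and]
        intro h hy
        exact h ⟨y, hy, rfl⟩
      · infer_instance
    rw [this] at hpos
    exact lt_irrefl 0 hpos

end
end

section
/- Let X be a separable Banach space and let {ℓ_k}_{k∈ℕ} ⊂ X* be a sequence of continuous linear functionals whose linear span is dense in X*. Let d ∈ ℕ and let μ be a Borel probability measure on X satisfying Assumption (d). Then there exist d₀ ∈ ℕ, coefficients a_{jk} ∈ ℝ (j=1,…,d, k=1,…,d₀), biases b_j ∈ ℝ, and a constant c > 0 such that the affine encoder E: X → ℝ^d with components E_j(u) = b_j + Σ_{k=1}^{d₀} a_{jk}ℓ_k(u) satisfies E_#μ ≥ c·Unif([0,1]^d). -/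
open MeasureTheory ENNReal

noncomputable section

/-- The product measure on `ℝ^d` with density `∏_j ρ_j(z_j)` w.r.t. Lebesgue measure. -/
def productLaw {d : ℕ} (ρ : Fin d → ℝ → ℝ) : Measure (Fin d → ℝ) :=
  volume.withDensity fun z => ENNReal.ofReal (∏ j, ρ j (z j))

/-- **Assumption (d).** The measure `μ` is the law of `u = ξ + ∑_{j=1}^d y_j e_j`,
where `e_1, …, e_d` are linearly independent with biorthogonal functionals
`e_1^*, …, e_d^*`, the coordinates `(y_1, …, y_d)` have a product law with densities
`ρ_j` each bounded below by a positive constant (a.e.) on some non-trivial interval,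
and `ξ` is independent of `y` with `e_j^*(ξ) = 0` almost surely. -/
def AssumptionD {X : Type*} [NormedAddCommGroup X] [NormedSpace ℝ X] [MeasurableSpace X]
    (μ : Measure X) (d : ℕ) (e : Fin d → X) (estar : Fin d → X → ℝ) : Prop :=
  LinearIndependent ℝ e ∧
  (∀ j k, estar j (e k) = if j = k then 1 else 0) ∧
  ∃ ρ : Fin d → ℝ → ℝ,
    (∀ j, (∀ z, 0 ≤ ρ j z) ∧ Integrable (ρ j) ∧ ∫ z, ρ j z = 1) ∧
    (∀ j, ∃ a b : ℝ, a < b ∧ ∃ ε : ℝ, 0 < ε ∧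
      ∀ᵐ z ∂(volume.restrict (Set.Ioo a b)), ε ≤ ρ j z) ∧
    ∃ (Ξ : Type) (_ : MeasurableSpace Ξ) (P : Measure Ξ) (_ : IsProbabilityMeasure P)
      (y : Ξ → Fin d → ℝ) (ξv : Ξ → X),
      Measurable y ∧ Measurable ξv ∧
      ProbabilityTheory.IndepFun y ξv P ∧
      Measure.map y P = productLaw ρ ∧
      (∀ j, ∀ᵐ ω ∂P, estar j (ξv ω) = 0) ∧
      μ = Measure.map (fun ω => ξv ω + ∑ j, y ω j • e j) P

/-!
Choose functionals `f_j` in the span of the `ℓ_k` that are biorthogonal to the `e_k`: evaluation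
at `e_1, …, e_d` maps `X*` onto `ℝ^d`, hence maps the dense span onto a dense, so closed, so full
subspace. For `u = ξ + ∑ y_j e_j` this gives `f(u) = r + y` with `r = f(ξ)` independent of `y`,
so the law of `f(u)` is the convolution of the laws of `r` and `y`. Take a box `R` with
half-widths `δ_j = |I_j| / 4` that is charged by the law of `r`, and the encoder
`E = (f - m) / (2δ)`. For each `x ∈ R`, the `y` with `(x + y - m) / (2δ) ∈ [0,1]^d` form a box of
side `2δ` inside `∏ I_j`, where the density of `y` is at least `∏ ε_j`; integrating over `x ∈ R`
gives `E_#μ(B) ≥ P(r ∈ R) ∏ ε_j ∏ 2δ_j |B|` for `B ⊆ [0,1]^d`.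
-/

open Set Function

theorem Submodule.map_eq_top_of_dense_of_surjective {𝕜 E F : Type*} [NontriviallyNormedField 𝕜]
    [CompleteSpace 𝕜] [AddCommGroup E] [TopologicalSpace E] [Module 𝕜 E] [AddCommGroup F]
    [TopologicalSpace F] [IsTopologicalAddGroup F] [Module 𝕜 F] [ContinuousSMul 𝕜 F] [T2Space F]
    [FiniteDimensional 𝕜 F] {S : Submodule 𝕜 E} (hS : Dense (S : Set E)) (Φ : E →L[𝕜] F)
    (hΦ : Surjective Φ) : S.map (Φ : E →ₗ[𝕜] F) = ⊤ := by
  have hdense : Dense (S.map (Φ : E →ₗ[𝕜] F) : Set F) := hΦ.denseRange.dense_image Φ.continuous hS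
  exact SetLike.coe_injective (by
    rw [← (Submodule.closed_of_finiteDimensional _).closure_eq, hdense.closure_eq]; rfl)

theorem exists_biorthogonal_mem_of_dense {X : Type*} [NormedAddCommGroup X] [NormedSpace ℝ X]
    {S : Submodule ℝ (X →L[ℝ] ℝ)} (hS : Dense (S : Set (X →L[ℝ] ℝ))) {d : ℕ} (e : Fin d → X)
    (estar : Fin d → X →L[ℝ] ℝ) (hbio : ∀ j k, estar j (e k) = if j = k then 1 else 0) :
    ∃ f : Fin d → X →L[ℝ] ℝ, (∀ j, f j ∈ S) ∧ ∀ j k, f j (e k) = if j = k then 1 else 0 := by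
  let Φ : (X →L[ℝ] ℝ) →L[ℝ] Fin d → ℝ := .pi fun k => .apply ℝ ℝ (e k)
  have hΦ : Surjective Φ := fun v => ⟨∑ j, v j • estar j, funext fun k => by simp [Φ, hbio]⟩
  have hmem (v : Fin d → ℝ) : ∃ g ∈ S, Φ g = v := by
    simpa using (Submodule.map_eq_top_of_dense_of_surjective hS Φ hΦ).ge Submodule.mem_top
  choose f hfS hfΦ using fun j => hmem (Pi.single j 1)
  exact ⟨f, hfS, fun j k => by simpa [Φ, Pi.single_apply, eq_comm] using congrFun (hfΦ j) k⟩

theorem Submodule.exists_fin_sum_eq_of_mem_span_range {R M : Type*} [Semiring R]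
    [AddCommMonoid M] [Module R M] {l : ℕ → M} {x : M} (hx : x ∈ Submodule.span R (range l)) :
    ∃ N, ∀ n ≥ N, ∃ c : Fin n → R, ∑ k : Fin n, c k • l k = x := by
  obtain ⟨c, rfl⟩ := Finsupp.mem_span_range_iff_exists_finsupp.mp hx
  obtain ⟨N, hN⟩ := Finset.exists_nat_subset_range c.support
  refine ⟨N, fun n hn => ⟨fun k => c k, ?_⟩⟩
  rw [Finsupp.sum_of_support_subset c (hN.trans (Finset.range_subset_range.2 hn)) _ (by simp),
    Fin.sum_univ_eq_sum_range (fun i => c i • l i)]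

theorem Submodule.exists_fin_sum_eq_of_forall_mem_span_range {R M ι : Type*} [Semiring R]
    [AddCommMonoid M] [Module R M] [Fintype ι] {l : ℕ → M} {x : ι → M}
    (hx : ∀ i, x i ∈ Submodule.span R (range l)) :
    ∃ (n : ℕ) (c : ι → Fin n → R), ∀ i, ∑ k : Fin n, c i k • l k = x i := by
  choose N hN using fun i => exists_fin_sum_eq_of_mem_span_range (hx i)
  choose c hc using fun i => hN i (∑ i, N i) (Finset.single_le_sum (by simp) (Finset.mem_univ i))
  exact ⟨_, c, hc⟩

theorem exists_pos_measure_Icc {ι : Type*} [Finite ι] (ν : Measure (ι → ℝ)) [NeZero ν]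
    {δ : ι → ℝ} (hδ : ∀ i, 0 < δ i) : ∃ t, 0 < ν (Icc (t - δ) (t + δ)) := by
  obtain ⟨t, -, ht⟩ := exists_mem_forall_mem_nhdsWithin_pos_measure (μ := ν)
    (s := univ) (NeZero.ne ν ∘ Measure.measure_univ_eq_zero.mp)
  refine ⟨t, ht _ (nhdsWithin_le_nhds (pi_Icc_mem_nhds (fun i => ?_) fun i => ?_))⟩ <;>
    simp [hδ i]

theorem volume_preimage_sub_div {ι : Type*} [Fintype ι] (c s : ι → ℝ) (hs : ∀ i, s i ≠ 0)
    (B : Set (ι → ℝ)) :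
    volume ((fun (z : ι → ℝ) i => (z i - c i) / s i) ⁻¹' B)
      = ENNReal.ofReal (∏ i, |s i|) * volume B := by
  classical
  let D : (ι → ℝ) →ₗ[ℝ] ι → ℝ := Matrix.toLin' (Matrix.diagonal fun i => (s i)⁻¹)
  have hdet : LinearMap.det D = ∏ i, (s i)⁻¹ := by
    rw [LinearMap.det_toLin', Matrix.det_diagonal]
  have hfactor : (fun z i => (z i - c i) / s i) = D ∘ fun z => z + -c := by
    funext z i
    simp [D, Matrix.mulVec_diagonal, div_eq_inv_mul, sub_eq_add_neg]
  rw [hfactor, preimage_comp, measure_preimage_add_right,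
    Measure.addHaar_preimage_linearMap _
      (hdet ▸ Finset.prod_ne_zero_iff.2 fun i _ => inv_ne_zero (hs i)), hdet,
    ← Finset.prod_inv_distrib]
  simp only [inv_inv, Finset.abs_prod]

theorem smul_cubeVol_le {d : ℕ} {ν : Measure (Fin d → ℝ)} {c : ℝ≥0∞}
    (h : ∀ B ⊆ unitCube d, MeasurableSet B → c * volume B ≤ ν B) : c • cubeVol d ≤ ν := by
  refine Measure.le_iff.2 fun A hA => ?_
  rw [Measure.smul_apply, cubeVol, Measure.restrict_apply hA, smul_eq_mul]
  exact (h _ inter_subset_right (hA.inter measurableSet_Icc)).trans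
    (measure_mono inter_subset_left)

theorem MeasureTheory.Measure.mul_le_conv_apply {M : Type*} [AddMonoid M] [MeasurableSpace M]
    [MeasurableAdd₂ M] (μ ν : Measure M) [SFinite ν] {R A : Set M}
    (hA : MeasurableSet A) {c : ℝ≥0∞} (h : ∀ x ∈ R, c ≤ ν ((x + ·) ⁻¹' A)) :
    c * μ R ≤ (μ ∗ ν) A := by
  have hA' : MeasurableSet ((fun p : M × M => p.1 + p.2) ⁻¹' A) := measurable_add hA
  rw [Measure.conv, Measure.map_apply measurable_add hA, Measure.prod_apply hA',
    ← setLIntegral_const]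
  exact (setLIntegral_mono (measurable_measure_prodMk_left hA') h).trans
    (setLIntegral_le_lintegral _ _)

theorem ofReal_prod_mul_volume_le_productLaw {d : ℕ} {ρ : Fin d → ℝ → ℝ} {α β ε : Fin d → ℝ}
    (hε : ∀ i, 0 ≤ ε i) (hρ : ∀ i, ∀ᵐ z ∂volume.restrict (Ioo (α i) (β i)), ε i ≤ ρ i z)
    {S : Set (Fin d → ℝ)} (hS : S ⊆ Icc α β) :
    ENNReal.ofReal (∏ i, ε i) * volume S ≤ productLaw ρ S := by
  have hbox : ∀ᵐ z ∂volume.restrict (Icc α β), ∀ i, ε i ≤ ρ i (z i) := by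
    rw [volume_pi, ← Measure.restrict_congr_set
      (Measure.univ_pi_Ioo_ae_eq_Icc (μ := fun _ => volume)),
      Measure.restrict_pi_pi, ae_all_iff]
    exact fun i => Measure.tendsto_eval_ae_ae.eventually (p := fun z => ε i ≤ ρ i z) (hρ i)
  calc ENNReal.ofReal (∏ i, ε i) * volume S = ∫⁻ _ in S, ENNReal.ofReal (∏ i, ε i) :=
        (setLIntegral_const _ _).symm
    _ ≤ ∫⁻ z in S, ENNReal.ofReal (∏ i, ρ i (z i)) :=
        lintegral_mono_ae <| (ae_restrict_of_ae_restrict_of_subset hS hbox).mono fun z hz =>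
          ENNReal.ofReal_le_ofReal (Finset.prod_le_prod (fun i _ => hε i) fun i _ => hz i)
    _ = productLaw ρ S := (withDensity_apply' _ _).symm

theorem ofReal_mul_volume_le_productLaw_preimage {d : ℕ} {ρ : Fin d → ℝ → ℝ}
    {α β ε : Fin d → ℝ} (hε : ∀ i, 0 ≤ ε i)
    (hρ : ∀ i, ∀ᵐ z ∂volume.restrict (Ioo (α i) (β i)), ε i ≤ ρ i z) {c s : Fin d → ℝ}
    (hs : ∀ i, 0 < s i) (hαc : ∀ i, α i ≤ c i) (hcβ : ∀ i, c i + s i ≤ β i) {B : Set (Fin d → ℝ)}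
    (hB : B ⊆ unitCube d) :
    ENNReal.ofReal ((∏ i, ε i) * ∏ i, s i) * volume B
      ≤ productLaw ρ ((fun z i => (z i - c i) / s i) ⁻¹' B) := by
  have hsub : (fun z i => (z i - c i) / s i) ⁻¹' B ⊆ Icc α β := fun z hz => by
    obtain ⟨h0, h1⟩ := hB hz
    refine ⟨fun i => ?_, fun i => ?_⟩
    · have h0i : 0 ≤ (z i - c i) / s i := h0 i
      linarith [hαc i, (le_div_iff₀ (hs i)).1 h0i]
    · linarith [hcβ i, (div_le_one (hs i)).1 (h1 i)]
  calc ENNReal.ofReal ((∏ i, ε i) * ∏ i, s i) * volume B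
      = ENNReal.ofReal (∏ i, ε i) * volume ((fun z i => (z i - c i) / s i) ⁻¹' B) := by
        rw [volume_preimage_sub_div c s (fun i => (hs i).ne'),
          ENNReal.ofReal_mul (Finset.prod_nonneg fun i _ => hε i), mul_assoc]
        simp only [abs_of_pos (hs _)]
    _ ≤ _ := ofReal_prod_mul_volume_le_productLaw hε hρ hsub

theorem exists_smul_cubeVol_le_map_of_indepFun {Ω : Type*} [MeasurableSpace Ω] {P : Measure Ω}
    [IsProbabilityMeasure P] {d : ℕ} {r y : Ω → Fin d → ℝ} (hr : Measurable r)
    (hy : Measurable y) (hind : ProbabilityTheory.IndepFun r y P) {ρ : Fin d → ℝ → ℝ}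
    (hy_law : P.map y = productLaw ρ) {α β ε : Fin d → ℝ} (hαβ : ∀ i, α i < β i)
    (hε : ∀ i, 0 < ε i) (hρ : ∀ i, ∀ᵐ z ∂volume.restrict (Ioo (α i) (β i)), ε i ≤ ρ i z) :
    ∃ m s : Fin d → ℝ, (∀ i, 0 < s i) ∧ ∃ c : ℝ, 0 < c ∧
      ENNReal.ofReal c • cubeVol d ≤ P.map fun ω i => (r ω i + y ω i - m i) / s i := by
  set δ : Fin d → ℝ := fun i => (β i - α i) / 4
  have hδ : ∀ i, 0 < δ i := fun i => div_pos (sub_pos.2 (hαβ i)) four_pos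
  have := Measure.isProbabilityMeasure_map (μ := P) hr.aemeasurable
  obtain ⟨t, ht⟩ := exists_pos_measure_Icc (P.map r) hδ
  set R := Icc (t - δ) (t + δ)
  set m : Fin d → ℝ := fun i => α i + t i + δ i
  set s : Fin d → ℝ := fun i => 2 * δ i
  have hs : ∀ i, 0 < s i := fun i => by linarith [hδ i]
  set g : (Fin d → ℝ) → Fin d → ℝ := fun w i => (w i - m i) / s i
  have hg : Measurable g := by fun_prop
  set K := ENNReal.ofReal ((∏ i, ε i) * ∏ i, s i)
  refine ⟨m, s, hs, (P.map r R).toReal * ((∏ i, ε i) * ∏ i, s i), ?_, ?_⟩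
  · exact mul_pos (ENNReal.toReal_pos ht.ne' (measure_ne_top _ _))
      (mul_pos (Finset.prod_pos fun i _ => hε i) (Finset.prod_pos fun i _ => hs i))
  change _ ≤ P.map (g ∘ (r + y))
  rw [← Measure.map_map hg (hr.add hy), hind.map_add_eq_map_conv_map hr hy]
  refine smul_cubeVol_le fun B hB hBm => ?_
  have hslice : ∀ x ∈ R, K * volume B ≤ P.map y ((x + ·) ⁻¹' (g ⁻¹' B)) := by
    intro x hx
    have hwindow (i : Fin d) : α i ≤ m i - x i ∧ m i - x i + s i ≤ β i := by
      have hxi : t i - δ i ≤ x i ∧ x i ≤ t i + δ i := ⟨hx.1 i, hx.2 i⟩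
      simp only [m, s, δ] at hxi ⊢
      constructor <;> linarith
    have hcomp : g ∘ (x + ·) = fun z i => (z i - (m i - x i)) / s i := by
      funext z i
      simp only [g, comp_apply, Pi.add_apply]
      ring
    rw [← preimage_comp, hcomp, hy_law]
    exact ofReal_mul_volume_le_productLaw_preimage (fun i => (hε i).le) hρ hs
      (fun i => (hwindow i).1) (fun i => (hwindow i).2) hB
  calc ENNReal.ofReal ((P.map r R).toReal * ((∏ i, ε i) * ∏ i, s i)) * volume B
      = K * volume B * P.map r R := by
        rw [ENNReal.ofReal_mul ENNReal.toReal_nonneg, ENNReal.ofReal_toReal (measure_ne_top _ _)]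
        ring
    _ ≤ ((P.map r ∗ P.map y).map g) B := by
        rw [Measure.map_apply hg hBm]
        exact Measure.mul_le_conv_apply _ _ (hg hBm) hslice

theorem encoder_don_general
    {X : Type*} [NormedAddCommGroup X] [NormedSpace ℝ X]
    [SecondCountableTopology X] [MeasurableSpace X] [BorelSpace X]
    (lk : ℕ → X →L[ℝ] ℝ)
    (hdense : Dense (Submodule.span ℝ (Set.range lk) : Set (X →L[ℝ] ℝ)))
    (d : ℕ)
    (μ : Measure X)
    (hass : ∃ (e : Fin d → X) (estar : Fin d → X →L[ℝ] ℝ),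
      AssumptionD μ d e fun j u => estar j u) :
    ∃ (d₀ : ℕ) (a : Fin d → Fin d₀ → ℝ) (bb : Fin d → ℝ) (c : ℝ), 0 < c ∧
      ENNReal.ofReal c • cubeVol d ≤
        Measure.map (fun u (j : Fin d) => bb j + ∑ k : Fin d₀, a j k * lk (k : ℕ) u) μ := by
  obtain ⟨e, estar, -, hbio, ρ, -, hρ, Ξ, _, P, _, y, ξ, hy, hξ, hind, hy_law, -, rfl⟩ := hass
  choose α β hαβ ε hε hρ using hρ
  obtain ⟨f, hf_span, hf_bio⟩ := exists_biorthogonal_mem_of_dense hdense e estar hbio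
  obtain ⟨d₀, A, hA⟩ := Submodule.exists_fin_sum_eq_of_forall_mem_span_range hf_span
  have hf : Measurable fun (u : X) j => f j u := by fun_prop
  set r : Ξ → Fin d → ℝ := fun ω j => f j (ξ ω)
  have hr : Measurable r := hf.comp hξ
  have hind_ry : ProbabilityTheory.IndepFun r y P := (hind.comp measurable_id hf).symm
  obtain ⟨m, s, hs, c, hc, hle⟩ :=
    exists_smul_cubeVol_le_map_of_indepFun hr hy hind_ry hy_law hαβ hε hρ
  refine ⟨d₀, fun j k => A j k / s j, fun j => -m j / s j, c, hc, ?_⟩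
  have hf_apply (j : Fin d) (u : X) : f j u = ∑ k : Fin d₀, A j k * lk k u := by
    simp [← hA j]
  have hF : Measurable fun ω => ξ ω + ∑ j, y ω j • e j := by fun_prop
  rw [Measure.map_map (by fun_prop) hF]
  convert hle using 2
  funext ω j
  have hfF : f j (ξ ω + ∑ k, y ω k • e k) = r ω j + y ω j := by simp [r, hf_bio]
  rw [comp_apply, ← hfF, hf_apply, sub_div, Finset.sum_div]
  simp only [div_mul_eq_mul_div]
  ring

/-- **Proposition (DeepONet encoder construction).** Let `X` be a separable Banach
space, `{ℓ_k} ⊆ X^*` with dense span, and `μ` a Borel probability measure satisfying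
Assumption (d). Then there exist `d₀ ∈ ℕ`, coefficients `a_{jk}`, biases `b_j` and a
constant `c > 0` such that the affine encoder `E_j(u) = b_j + ∑_k a_{jk} ℓ_k(u)`
satisfies `E_#μ ≥ c · Unif([0,1]^d)`. -/
theorem encoder_don
    {X : Type*} [NormedAddCommGroup X] [NormedSpace ℝ X] [CompleteSpace X]
    [SecondCountableTopology X] [MeasurableSpace X] [BorelSpace X]
    (lk : ℕ → X →L[ℝ] ℝ)
    (hdense : Dense (Submodule.span ℝ (Set.range lk) : Set (X →L[ℝ] ℝ)))
    (d : ℕ) (hd : 1 ≤ d)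
    (μ : Measure X) [IsProbabilityMeasure μ]
    (hass : ∃ (e : Fin d → X) (estar : Fin d → X →L[ℝ] ℝ),
      AssumptionD μ d e fun j u => estar j u) :
    ∃ (d₀ : ℕ) (a : Fin d → Fin d₀ → ℝ) (bb : Fin d → ℝ) (c : ℝ), 0 < c ∧
      ENNReal.ofReal c • cubeVol d ≤
        Measure.map (fun u (j : Fin d) => bb j + ∑ k : Fin d₀, a j k * lk (k : ℕ) u) μ :=
  encoder_don_general lk hdense d μ hass

end
end

section
/- Let D ⊂ ℝ^d, let ℓ: ℕ → ℕ∪{∞} be non-decreasing, let α > 0, and let f ∈ U^{α,∞}_ℓ(D). Then for every e ∈ ℕ, every matrix C ∈ ℝ^{d×e}, and every b ∈ ℝ^d, there exists R ∈ (0,∞) such that the map x ↦ f(Cx + b) belongs to R·U^{α,∞}_ℓ(E), where E := { x ∈ ℝ^e : Cx + b ∈ D } ⊂ ℝ^e. -/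
open MeasureTheory ENNReal

noncomputable section

open Pointwise

/-- The ReLU activation function. -/
def relu (x : ℝ) : ℝ := max x 0

/-- A (fully connected feed-forward) neural network: a tuple of affine layers.
`L` is the depth (number of affine maps), `dims j` the width of layer `j`
(only `dims 0, …, dims L` are relevant), `A j`/`b j` the weight matrix and bias
of the `(j+1)`-th affine map. -/
structure ReLUNet where
  L : ℕ
  dims : ℕ → ℕ
  A : (j : ℕ) → Matrix (Fin (dims (j + 1))) (Fin (dims j)) ℝ
  b : (j : ℕ) → Fin (dims (j + 1)) → ℝ

namespace ReLUNet

/-- The hidden representation after `j` layers, each affine map followed by ReLU. -/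
def hidden (ψ : ReLUNet) : (j : ℕ) → (Fin (ψ.dims 0) → ℝ) → Fin (ψ.dims j) → ℝ
  | 0, x => x
  | (j + 1), x => fun i => relu ((∑ k, ψ.A j i k * ψ.hidden j x k) + ψ.b j i)

/-- The ReLU realization `R_σ ψ = T_L ∘ (σ ∘ T_{L-1}) ∘ ⋯ ∘ (σ ∘ T_1)`:
the final affine map is applied without activation. -/
def realize (ψ : ReLUNet) (x : Fin (ψ.dims 0) → ℝ) (i : Fin (ψ.dims (ψ.L - 1 + 1))) : ℝ :=
  (∑ k, ψ.A (ψ.L - 1) i k * ψ.hidden (ψ.L - 1) x k) + ψ.b (ψ.L - 1) i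

open Classical in
/-- `W ψ`: the number of nonzero weights and biases of `ψ`. -/
def W (ψ : ReLUNet) : ℕ :=
  ∑ j ∈ Finset.range ψ.L,
    ((((Finset.univ : Finset (Fin (ψ.dims (j + 1)) × Fin (ψ.dims j))).filter
        fun p => ψ.A j p.1 p.2 ≠ 0).card)
      + (((Finset.univ : Finset (Fin (ψ.dims (j + 1)))).filter fun i => ψ.b j i ≠ 0).card))

/-- All weight and bias entries have magnitude at most 1, i.e. `‖ψ‖_NN ≤ 1`. -/
def normBdd (ψ : ReLUNet) : Prop :=
  ∀ j < ψ.L, (∀ i k, |ψ.A j i k| ≤ 1) ∧ (∀ i, |ψ.b j i| ≤ 1)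

end ReLUNet

/-- `Σ_{d,n}^ℓ` : realizations of ReLU networks `ℝ^d → ℝ` with at most `n` nonzero
weights, depth at most `ℓ n`, and weight magnitudes at most `1`. -/
def SigmaSet (d n : ℕ) (ℓ : ℕ → ℕ∞) : Set ((Fin d → ℝ) → ℝ) :=
  { g | ∃ ψ : ReLUNet, ∃ h0 : ψ.dims 0 = d, ∃ hout : ψ.dims (ψ.L - 1 + 1) = 1,
      1 ≤ ψ.L ∧ ψ.W ≤ n ∧ (ψ.L : ℕ∞) ≤ ℓ n ∧ ψ.normBdd ∧
      ∀ x : Fin d → ℝ, g x = ψ.realize (fun i => x (Fin.cast h0 i)) (Fin.cast hout.symm 0) }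

/-- The sup-distance (in `ℝ≥0∞`) between two functions over a set `D`. -/
def supDist {d : ℕ} (D : Set (Fin d → ℝ)) (f g : (Fin d → ℝ) → ℝ) : ℝ≥0∞ :=
  ⨆ x ∈ D, ENNReal.ofReal |f x - g x|

/-- The unit ball `U^{α,∞}_ℓ(D)` of the neural network approximation space:
functions bounded by `1` on `D` which are approximated in `L^∞(D)` at rate `n^{-α}`
by networks from `Σ_{d,n}^ℓ`. -/
def UnitBall (d : ℕ) (α : ℝ) (ℓ : ℕ → ℕ∞) (D : Set (Fin d → ℝ)) :
    Set ((Fin d → ℝ) → ℝ) :=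
  { f | (∀ x ∈ D, |f x| ≤ 1) ∧
      ∀ n : ℕ, 1 ≤ n →
        (⨅ g ∈ SigmaSet d n ℓ, supDist D f g) ≤ ENNReal.ofReal ((n : ℝ) ^ (-α)) }

/-!
A network for `g` on `ℝ^d` becomes one for `x ↦ R⁻¹ g (C x + b)` on `ℝ^e` by absorbing the affine
map into the first layer and, by positive homogeneity of ReLU, scaling the first layer and all
biases by `R⁻¹`. This multiplies the number of nonzero weights by at most `e + 1`, and keeps all
weights in `[-1, 1]` once `R` dominates the column sums of `|C|` and `∑ |bᵢ| + 1`. So the `n`-term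
error of `f` bounds, up to the factor `R⁻¹`, the `(e + 1) n`-term error of `R⁻¹ f (C · + b)`, and
`R ≥ (2 (e + 1)) ^ α` absorbs the loss in the rate. For fewer than `e + 1` weights the zero network
is good enough, since `R⁻¹ f (C · + b)` is bounded by `R⁻¹`.
-/

open Matrix

lemma relu_mul_of_nonneg {c : ℝ} (hc : 0 ≤ c) (x : ℝ) : relu (c * x) = c * relu x := by
  rw [relu, relu, mul_max_of_nonneg _ _ hc, mul_zero]

section NonzeroCount

open Finset

variable {m n p α : Type*} [Fintype m] [Fintype n] [Fintype p] [DecidableEq α]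

lemma card_const_mul_ne_zero_le [MulZeroClass α] (c : α) (v : m → α) :
    #{i | c * v i ≠ 0} ≤ #{i | v i ≠ 0} :=
  card_le_card fun _ => by simpa using right_ne_zero_of_mul

variable [NonUnitalNonAssocSemiring α] [DecidableEq m]

lemma Matrix.card_mul_ne_zero_le (M : Matrix m n α) (N : Matrix n p α) :
    #{q : m × p | (M * N) q.1 q.2 ≠ 0} ≤ #{q : m × n | M q.1 q.2 ≠ 0} * Fintype.card p := by
  calc #{q : m × p | (M * N) q.1 q.2 ≠ 0}
      ≤ #(({q : m × n | M q.1 q.2 ≠ 0} : Finset _).image Prod.fst ×ˢ (univ : Finset p)) := by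
        refine card_le_card fun q hq => ?_
        obtain ⟨j, -, hj⟩ := exists_ne_zero_of_sum_ne_zero (mem_filter.1 hq).2
        simpa using ⟨j, left_ne_zero_of_mul hj⟩
    _ ≤ _ := by
        rw [card_product, card_univ]
        exact Nat.mul_le_mul_right _ card_image_le

lemma Matrix.card_mulVec_add_ne_zero_le (M : Matrix m n α) (v : n → α) (w : m → α) :
    #{i | (M *ᵥ v + w) i ≠ 0} ≤ #{q : m × n | M q.1 q.2 ≠ 0} + #{i | w i ≠ 0} := by
  calc #{i | (M *ᵥ v + w) i ≠ 0}
      ≤ #(({q : m × n | M q.1 q.2 ≠ 0} : Finset _).image Prod.fst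
          ∪ ({i | w i ≠ 0} : Finset m)) := by
        refine card_le_card fun i hi => ?_
        by_cases hw : w i = 0
        · have hMv : (M *ᵥ v) i ≠ 0 := by simpa [hw] using (mem_filter.1 hi).2
          obtain ⟨j, -, hj⟩ := exists_ne_zero_of_sum_ne_zero hMv
          exact mem_union_left _ (mem_image.2 ⟨(i, j), by simpa using left_ne_zero_of_mul hj, rfl⟩)
        · exact mem_union_right _ (by simpa using hw)
    _ ≤ _ := (card_union_le _ _).trans (Nat.add_le_add_right card_image_le _)

end NonzeroCount

lemma abs_sum_mul_le_sum_abs {ι : Type*} [Fintype ι] {a : ι → ℝ} (ha : ∀ i, |a i| ≤ 1)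
    (v : ι → ℝ) : |∑ i, a i * v i| ≤ ∑ i, |v i| :=
  (Finset.abs_sum_le_sum_abs _ _).trans <| Finset.sum_le_sum fun i _ => by
    rw [abs_mul]; exact mul_le_of_le_one_left (abs_nonneg _) (ha i)

namespace ReLUNet

def preact (ψ : ReLUNet) (j : ℕ) (x : Fin (ψ.dims 0) → ℝ) : Fin (ψ.dims (j + 1)) → ℝ :=
  ψ.A j *ᵥ ψ.hidden j x + ψ.b j

lemma hidden_succ (ψ : ReLUNet) (j : ℕ) (x : Fin (ψ.dims 0) → ℝ) :
    ψ.hidden (j + 1) x = fun i => relu (ψ.preact j x i) := by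
  rfl

lemma realize_eq_preact (ψ : ReLUNet) : ψ.realize = ψ.preact (ψ.L - 1) := by
  rfl

def precompAffine (ψ : ReLUNet) {e : ℕ} (C : Matrix (Fin (ψ.dims 0)) (Fin e) ℝ)
    (b : Fin (ψ.dims 0) → ℝ) (c : ℝ) : ReLUNet where
  L := ψ.L
  dims
    | 0 => e
    | j + 1 => ψ.dims (j + 1)
  A
    | 0 => c • (ψ.A 0 * C)
    | j + 1 => ψ.A (j + 1)
  b
    | 0 => c • (ψ.A 0 *ᵥ b + ψ.b 0)
    | j + 1 => c • ψ.b (j + 1)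

variable (ψ : ReLUNet) {e : ℕ} (C : Matrix (Fin (ψ.dims 0)) (Fin e) ℝ) (b : Fin (ψ.dims 0) → ℝ)
  {c : ℝ}

lemma preact_precompAffine (hc : 0 ≤ c) (x : Fin e → ℝ) (j : ℕ) :
    (ψ.precompAffine C b c).preact j x = c • ψ.preact j (C *ᵥ x + b) := by
  induction j with
  | zero =>
    change (c • (ψ.A 0 * C)) *ᵥ x + c • (ψ.A 0 *ᵥ b + ψ.b 0) = c • (ψ.A 0 *ᵥ (C *ᵥ x + b) + ψ.b 0)
    rw [smul_mulVec, ← mulVec_mulVec, mulVec_add, ← smul_add, add_assoc]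
  | succ j ih =>
    have hidden_eq :
        (ψ.precompAffine C b c).hidden (j + 1) x = c • ψ.hidden (j + 1) (C *ᵥ x + b) :=
      funext fun i => (congrArg relu (congrFun ih i)).trans (relu_mul_of_nonneg hc _)
    change ψ.A (j + 1) *ᵥ (ψ.precompAffine C b c).hidden (j + 1) x + c • ψ.b (j + 1) = _
    rw [hidden_eq, mulVec_smul, preact, smul_add]

lemma realize_precompAffine (hc : 0 ≤ c) (x : Fin e → ℝ) :
    (ψ.precompAffine C b c).realize x = c • ψ.realize (C *ᵥ x + b) := by
  rw [realize_eq_preact, realize_eq_preact]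
  exact ψ.preact_precompAffine C b hc x _

open Finset in
lemma W_precompAffine_le : (ψ.precompAffine C b c).W ≤ (e + 1) * ψ.W := by
  rw [W, W, mul_sum]
  refine sum_le_sum fun j _ => ?_
  rcases j with _ | j
  · have hA : #{q : Fin (ψ.dims 1) × Fin e | (c • (ψ.A 0 * C)) q.1 q.2 ≠ 0}
        ≤ #{q : Fin (ψ.dims 1) × Fin (ψ.dims 0) | ψ.A 0 q.1 q.2 ≠ 0} * e :=
      (card_const_mul_ne_zero_le c fun q : Fin (ψ.dims 1) × Fin e => (ψ.A 0 * C) q.1 q.2).trans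
        (by simpa using card_mul_ne_zero_le (ψ.A 0) C)
    have hb : #{i | (c • (ψ.A 0 *ᵥ b + ψ.b 0)) i ≠ 0}
        ≤ #{q : Fin (ψ.dims 1) × Fin (ψ.dims 0) | ψ.A 0 q.1 q.2 ≠ 0} + #{i | ψ.b 0 i ≠ 0} :=
      (card_const_mul_ne_zero_le c _).trans (card_mulVec_add_ne_zero_le (ψ.A 0) b (ψ.b 0))
    change #{q : Fin (ψ.dims 1) × Fin e | (c • (ψ.A 0 * C)) q.1 q.2 ≠ 0}
      + #{i | (c • (ψ.A 0 *ᵥ b + ψ.b 0)) i ≠ 0} ≤ _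
    nlinarith
  · change #{q : Fin (ψ.dims (j + 2)) × Fin (ψ.dims (j + 1)) | ψ.A (j + 1) q.1 q.2 ≠ 0}
      + #{i | c * ψ.b (j + 1) i ≠ 0} ≤ _
    nlinarith [card_const_mul_ne_zero_le c (ψ.b (j + 1))]

lemma normBdd_precompAffine (hψ : ψ.normBdd) (hc : 0 ≤ c) (hC : ∀ k, c * ∑ m, |C m k| ≤ 1)
    (hb : c * (∑ m, |b m| + 1) ≤ 1) : (ψ.precompAffine C b c).normBdd := by
  have hc_le_one : c ≤ 1 :=
    (le_mul_of_one_le_right hc (le_add_of_nonneg_left (by positivity))).trans hb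
  intro j hj
  rcases j with _ | j
  · obtain ⟨hA, hb₀⟩ := hψ 0 hj
    refine ⟨fun i k => ?_, fun i => ?_⟩
    · change |c * ∑ m, ψ.A 0 i m * C m k| ≤ 1
      rw [abs_mul, abs_of_nonneg hc]
      exact (mul_le_mul_of_nonneg_left (abs_sum_mul_le_sum_abs (hA i) _) hc).trans (hC k)
    · change |c * ((ψ.A 0 *ᵥ b) i + ψ.b 0 i)| ≤ 1
      rw [abs_mul, abs_of_nonneg hc]
      refine (mul_le_mul_of_nonneg_left ?_ hc).trans hb
      exact (abs_add_le _ _).trans (add_le_add (abs_sum_mul_le_sum_abs (hA i) b) (hb₀ i))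
  · obtain ⟨hA, hb⟩ := hψ (j + 1) hj
    refine ⟨hA, fun i => ?_⟩
    change |c * ψ.b (j + 1) i| ≤ 1
    rw [abs_mul, abs_of_nonneg hc]
    exact mul_le_one₀ hc_le_one (abs_nonneg _) (hb i)

end ReLUNet

section SigmaSet

variable {d e n : ℕ} {ℓ : ℕ → ℕ∞}

lemma SigmaSet_mono (hℓ : Monotone ℓ) {m : ℕ} (h : m ≤ n) : SigmaSet d m ℓ ⊆ SigmaSet d n ℓ := by
  rintro g ⟨ψ, h0, hout, hL, hW, hdepth, hψ, hg⟩
  exact ⟨ψ, h0, hout, hL, hW.trans h, hdepth.trans (hℓ h), hψ, hg⟩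

lemma zero_mem_SigmaSet (h : 1 ≤ ℓ n) : (0 : (Fin d → ℝ) → ℝ) ∈ SigmaSet d n ℓ := by
  refine ⟨⟨1, fun j => if j = 0 then d else 1, fun _ => 0, fun _ => 0⟩, rfl, rfl, le_rfl, ?_,
    by simpa using h, fun _ _ => ⟨fun _ _ => by simp, fun _ => by simp⟩, fun x => ?_⟩
  · simp [ReLUNet.W]
  · simp only [ReLUNet.realize, Pi.zero_apply, add_zero]
    exact (Finset.sum_eq_zero fun _ _ => zero_mul _).symm

lemma comp_affine_mem_SigmaSet (hℓ : Monotone ℓ) {g : (Fin d → ℝ) → ℝ} (hg : g ∈ SigmaSet d n ℓ)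
    (C : Matrix (Fin d) (Fin e) ℝ) (b : Fin d → ℝ) {c : ℝ} (hc : 0 ≤ c)
    (hC : ∀ k, c * ∑ m, |C m k| ≤ 1) (hb : c * (∑ m, |b m| + 1) ≤ 1) :
    (fun x => c * g (C *ᵥ x + b)) ∈ SigmaSet e ((e + 1) * n) ℓ := by
  obtain ⟨ψ, h0, hout, hL, hW, hdepth, hψ, hg⟩ := hg
  refine ⟨ψ.precompAffine (C.submatrix (Fin.cast h0) id) (b ∘ Fin.cast h0) c, rfl, hout, hL,
    (ψ.W_precompAffine_le _ _).trans (Nat.mul_le_mul_left _ hW),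
    hdepth.trans (hℓ (Nat.le_mul_of_pos_left n e.succ_pos)),
    ψ.normBdd_precompAffine _ _ hψ hc (fun k => ?_) ?_, fun x => ?_⟩
  · simpa only [submatrix_apply, id, Fin.sum_congr' (fun m => |C m k|) h0] using hC k
  · simpa only [Function.comp_apply, Fin.sum_congr' (fun m => |b m|) h0] using hb
  · change c * g (C *ᵥ x + b) = _
    rw [hg]
    exact (congrFun (ψ.realize_precompAffine _ _ hc x) _).symm

end SigmaSet

def approxError (d n : ℕ) (ℓ : ℕ → ℕ∞) (D : Set (Fin d → ℝ)) (f : (Fin d → ℝ) → ℝ) : ℝ≥0∞ :=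
  ⨅ g ∈ SigmaSet d n ℓ, supDist D f g

section ApproxError

variable {d e n : ℕ} {ℓ : ℕ → ℕ∞} {α : ℝ} {D : Set (Fin d → ℝ)} {f : (Fin d → ℝ) → ℝ}

lemma mem_UnitBall_iff : f ∈ UnitBall d α ℓ D ↔
    (∀ x ∈ D, |f x| ≤ 1) ∧ ∀ n : ℕ, 1 ≤ n → approxError d n ℓ D f ≤ ENNReal.ofReal (n ^ (-α)) :=
  Iff.rfl

lemma one_le_of_mem_UnitBall (hf : f ∈ UnitBall d α ℓ D) : 1 ≤ ℓ 1 := by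
  by_contra h
  have hempty : SigmaSet d 1 ℓ = ∅ :=
    Set.eq_empty_of_forall_notMem fun _ ⟨_, _, _, hL, _, hdepth, _⟩ =>
      h ((Nat.one_le_cast.2 hL).trans hdepth)
  simpa [hempty] using hf.2 1 le_rfl

lemma approxError_antitone (hℓ : Monotone ℓ) : Antitone fun n => approxError d n ℓ D f :=
  fun _ _ h => biInf_mono (SigmaSet_mono hℓ h)

lemma approxError_le_supDist_zero (h : 1 ≤ ℓ n) : approxError d n ℓ D f ≤ supDist D f 0 :=
  iInf₂_le _ (zero_mem_SigmaSet h)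

lemma supDist_comp_mul_le (φ : (Fin e → ℝ) → Fin d → ℝ) (g : (Fin d → ℝ) → ℝ) {c : ℝ}
    (hc : 0 ≤ c) :
    supDist {x | φ x ∈ D} (fun x => c * f (φ x)) (fun x => c * g (φ x))
      ≤ ENNReal.ofReal c * supDist D f g := by
  refine iSup₂_le fun x hx => ?_
  rw [← mul_sub, abs_mul, abs_of_nonneg hc, ENNReal.ofReal_mul hc]
  exact mul_le_mul_right (le_iSup₂ (f := fun y (_ : y ∈ D) => ENNReal.ofReal |f y - g y|) _ hx) _

lemma approxError_comp_affine_le (hℓ : Monotone ℓ) (C : Matrix (Fin d) (Fin e) ℝ) (b : Fin d → ℝ)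
    {c : ℝ} (hc : 0 < c) (hC : ∀ k, c * ∑ m, |C m k| ≤ 1) (hb : c * (∑ m, |b m| + 1) ≤ 1) :
    approxError e ((e + 1) * n) ℓ {x | C *ᵥ x + b ∈ D} (fun x => c * f (C *ᵥ x + b))
      ≤ ENNReal.ofReal c * approxError d n ℓ D f := by
  have hc₀ : ENNReal.ofReal c ≠ 0 := ENNReal.ofReal_ne_zero_iff.2 hc
  calc _ ≤ ⨅ g ∈ SigmaSet d n ℓ,
        supDist {x | C *ᵥ x + b ∈ D} (fun x => c * f (C *ᵥ x + b)) (fun x => c * g (C *ᵥ x + b)) :=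
        le_iInf₂ fun g hg => iInf₂_le _ (comp_affine_mem_SigmaSet hℓ hg C b hc.le hC hb)
    _ ≤ ⨅ g ∈ SigmaSet d n ℓ, ENNReal.ofReal c * supDist D f g :=
        iInf₂_mono fun g _ => supDist_comp_mul_le (fun x => C *ᵥ x + b) g hc.le
    _ = ENNReal.ofReal c * approxError d n ℓ D f := by
        simp only [approxError, ENNReal.mul_iInf_of_ne hc₀ ENNReal.ofReal_ne_top]

end ApproxError

lemma Nat.le_two_mul_div_mul {k m : ℕ} (hm : 0 < m) (hmk : m ≤ k) : k ≤ 2 * (k / m * m) := by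
  have := Nat.lt_div_mul_add (a := k) hm
  have := Nat.le_mul_of_pos_left m (Nat.div_pos hmk hm)
  omega

lemma inv_mul_rpow_neg_le {k n B R α : ℝ} (hα : 0 ≤ α) (hk : 0 < k) (hn : 0 ≤ n) (hB : 0 < B)
    (hkn : k ≤ B * n) (hBR : B ^ α ≤ R) : R⁻¹ * n ^ (-α) ≤ k ^ (-α) :=
  calc R⁻¹ * n ^ (-α) ≤ B ^ (-α) * n ^ (-α) := by
        rw [Real.rpow_neg hB.le]
        gcongr
    _ = (B * n) ^ (-α) := (Real.mul_rpow hB.le hn).symm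
    _ ≤ k ^ (-α) := Real.rpow_le_rpow_of_nonpos hk hkn (neg_nonpos.2 hα)

section Dilation

variable {d e : ℕ} {ℓ : ℕ → ℕ∞} {α : ℝ} {D : Set (Fin d → ℝ)} {f : (Fin d → ℝ) → ℝ}
  (C : Matrix (Fin d) (Fin e) ℝ) (b : Fin d → ℝ) {R : ℝ}

lemma approxError_comp_affine_le_rpow_of_lt (hℓ : Monotone ℓ) (hα : 0 ≤ α)
    (hf : f ∈ UnitBall d α ℓ D) (hR : 0 < R) (hC : ∀ k, R⁻¹ * ∑ m, |C m k| ≤ 1)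
    (hb : R⁻¹ * (∑ m, |b m| + 1) ≤ 1) (hBR : (2 * (e + 1) : ℝ) ^ α ≤ R) {k : ℕ} (hk : e < k) :
    approxError e k ℓ {x | C *ᵥ x + b ∈ D} (fun x => R⁻¹ * f (C *ᵥ x + b))
      ≤ ENNReal.ofReal ((k : ℝ) ^ (-α)) := by
  set n := k / (e + 1)
  have hn : 1 ≤ n := (Nat.one_le_div_iff e.succ_pos).2 hk
  have hkn : (k : ℝ) ≤ 2 * (e + 1) * n := by
    have := Nat.le_two_mul_div_mul e.succ_pos hk
    rw [mul_assoc, mul_comm _ (n : ℝ)]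
    exact_mod_cast this
  calc _ ≤ approxError e ((e + 1) * n) ℓ {x | C *ᵥ x + b ∈ D} (fun x => R⁻¹ * f (C *ᵥ x + b)) :=
        approxError_antitone hℓ (Nat.mul_div_le k (e + 1))
    _ ≤ ENNReal.ofReal R⁻¹ * approxError d n ℓ D f :=
        approxError_comp_affine_le hℓ C b (inv_pos.2 hR) hC hb
    _ ≤ ENNReal.ofReal R⁻¹ * ENNReal.ofReal ((n : ℝ) ^ (-α)) := by
        gcongr
        exact (mem_UnitBall_iff.1 hf).2 n hn
    _ = ENNReal.ofReal (R⁻¹ * (n : ℝ) ^ (-α)) := (ENNReal.ofReal_mul (inv_nonneg.2 hR.le)).symm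
    _ ≤ _ := ENNReal.ofReal_le_ofReal <|
        inv_mul_rpow_neg_le hα (by norm_cast; omega) n.cast_nonneg (by positivity) hkn hBR

lemma inv_mul_comp_affine_mem_UnitBall (hℓ : Monotone ℓ) (hα : 0 ≤ α)
    (hf : f ∈ UnitBall d α ℓ D) (hR : 0 < R) (hC : ∀ k, R⁻¹ * ∑ m, |C m k| ≤ 1)
    (hb : R⁻¹ * (∑ m, |b m| + 1) ≤ 1) (hBR : (2 * (e + 1) : ℝ) ^ α ≤ R) :
    (fun x => R⁻¹ * f (C *ᵥ x + b)) ∈ UnitBall e α ℓ {x | C *ᵥ x + b ∈ D} := by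
  have hbound : ∀ x ∈ {x | C *ᵥ x + b ∈ D}, |R⁻¹ * f (C *ᵥ x + b)| ≤ R⁻¹ := fun x hx => by
    rw [abs_mul, abs_of_pos (inv_pos.2 hR)]
    exact mul_le_of_le_one_right (inv_nonneg.2 hR.le) (hf.1 _ hx)
  have hR_le : ∀ k : ℕ, 0 < k → k ≤ e + 1 → R⁻¹ ≤ (k : ℝ) ^ (-α) := fun k hk hke => by
    have hke' : (k : ℝ) ≤ 2 * (e + 1) * 1 := by norm_cast; omega
    simpa using inv_mul_rpow_neg_le hα (by positivity) zero_le_one (by positivity) hke' hBR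
  refine mem_UnitBall_iff.2
    ⟨fun x hx => (hbound x hx).trans (by simpa using hR_le 1 one_pos (by omega)), fun k hk => ?_⟩
  rcases le_or_gt k e with hke | hek
  · calc _ ≤ supDist {x | C *ᵥ x + b ∈ D} (fun x => R⁻¹ * f (C *ᵥ x + b)) 0 :=
          approxError_le_supDist_zero ((one_le_of_mem_UnitBall hf).trans (hℓ hk))
      _ ≤ ENNReal.ofReal R⁻¹ :=
          iSup₂_le fun x hx => ENNReal.ofReal_le_ofReal (by simpa using hbound x hx)
      _ ≤ _ := ENNReal.ofReal_le_ofReal (hR_le k hk (by omega))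
  · exact approxError_comp_affine_le_rpow_of_lt C b hℓ hα hf hR hC hb hBR hek

end Dilation

/-- **Lemma (dilation).** If `f ∈ U^{α,∞}_ℓ(D)`, then for every `e ∈ ℕ`, matrix
`C ∈ ℝ^{d×e}` and `b ∈ ℝ^d`, there is `R ∈ (0,∞)` with
`f(C·+b) ∈ R · U^{α,∞}_ℓ(E)`, where `E = {x ∈ ℝ^e : C x + b ∈ D}`. -/
theorem dilation (d : ℕ) (D : Set (Fin d → ℝ))
    (ℓ : ℕ → ℕ∞) (hmono : Monotone ℓ) (α : ℝ) (hα : 0 < α)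
    (f : (Fin d → ℝ) → ℝ) (hf : f ∈ UnitBall d α ℓ D)
    (e : ℕ) (C : Matrix (Fin d) (Fin e) ℝ) (b : Fin d → ℝ) :
    ∃ R : ℝ, 0 < R ∧
      (fun x => f (C.mulVec x + b)) ∈
        R • UnitBall e α ℓ { x : Fin e → ℝ | C.mulVec x + b ∈ D } := by
  set R : ℝ := ∑ k, ∑ m, |C m k| + (∑ m, |b m| + 1) + (2 * (e + 1) : ℝ) ^ α
  have hC_nonneg : 0 ≤ ∑ k, ∑ m, |C m k| := by positivity
  have hb_nonneg : 0 ≤ ∑ m, |b m| := by positivity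
  have hBα : 0 ≤ (2 * (e + 1) : ℝ) ^ α := by positivity
  have hR : 0 < R := by positivity
  refine ⟨R, hR, (Set.mem_smul_set_iff_inv_smul_mem₀ hR.ne' _ _).2 <|
    inv_mul_comp_affine_mem_UnitBall C b hmono hα.le hf hR (fun k => ?_) ?_ (by linarith)⟩
  · refine (inv_mul_le_one₀ hR).2 ((Finset.single_le_sum (f := fun k => ∑ m, |C m k|)
      (fun k _ => by positivity) (Finset.mem_univ k)).trans ?_)
    linarith
  · exact (inv_mul_le_one₀ hR).2 (by linarith)

end
end
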